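/- arXiv:1602.02294 — 2 statements merged into one kernel-verified Lean document; each statement's English description precedes it below -/
import Mathlib

section
/- Let {S(t)} be an i.i.d. source with marginal pmf p_S on a finite alphabet 𝒮, let p_{Y1,Y2|X} be a discrete memoryless broadcast channel with finite alphabets, let Ŝ_1, Ŝ_2 be finite reconstruction alphabets, let w_i : 𝒮×Ŝ_i → [0,∞) be distortion measures and d_1, d_2, κ ≥ 0. Then (κ,d_1,d_2) is achievable for System Π under distortion measures w_1 and w_2 if and only if (κ, 𝒬(w_1,d_1), 𝒬(w_2,d_2)) ∈ Γ, where 𝒬(w_i,d_i) is the set of joint pmfs q on 𝒮×Ŝ_i with 𝒮-marginal p_S satisfying Σ_{s,ŝ} q(s,ŝ) w_i(s,ŝ) ≤ d_i. -/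
/-!
Both conditions concern only the time-averaged joint pmf of `(S(t), Ŝᵢ(t))` of a code, and that
pmf always has `S`-marginal `p_S`. Expected distortion is Lipschitz in the 1-norm, so a code whose
averaged pmf is close to `𝒬(w, d)` has distortion at most `d + ε`. Conversely, achievability forces
`d` to be at least the least attainable distortion `∑ₛ p_S(s) minᵤ w(s, u)`; a pmf whose distortion
exceeds `d` only slightly is then pushed into `𝒬(w, d)` by moving a small amount of its mass onto
minimisers of `w(s, ·)`, which changes it only slightly in 1-norm.
-/

open scoped BigOperators Classical
open Finset

noncomputable section

/-- `p` is a probability mass function on the finite type `α`. -/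
def IsPMF {α : Type} [Fintype α] (p : α → ℝ) : Prop :=
  (∀ a, 0 ≤ p a) ∧ ∑ a, p a = 1

/-- Shannon entropy (base 2) of a pmf on a finite type. -/
def Hent {α : Type} [Fintype α] (p : α → ℝ) : ℝ :=
  -∑ a, p a * Real.logb 2 (p a)

/-- Mutual information `I(A;B)` of a joint pmf on `α × β` (base-2 logarithms). -/
def MI {α β : Type} [Fintype α] [Fintype β] (p : α × β → ℝ) : ℝ :=
  Hent (fun a => ∑ b, p (a, b)) + Hent (fun b => ∑ a, p (a, b)) - Hent p

/-- Conditional mutual information `I(A;B|C)` of a joint pmf on `α × β × γ`. -/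
def CMI {α β γ : Type} [Fintype α] [Fintype β] [Fintype γ] (p : α × β × γ → ℝ) : ℝ :=
  Hent (fun ac : α × γ => ∑ b, p (ac.1, b, ac.2))
    + Hent (fun bc : β × γ => ∑ a, p (a, bc.1, bc.2))
    - Hent p
    - Hent (fun c : γ => ∑ a, ∑ b, p (a, b, c))

/-- A channel: every input letter gives a pmf on outputs. -/
def IsChannel {X Z : Type} [Fintype Z] (W : X → Z → ℝ) : Prop :=
  ∀ x, IsPMF (W x)

/-- Marginal channel to receiver 1 of a broadcast channel. -/
def margW1 {X Y1 Y2 : Type} [Fintype Y2] (W : X → Y1 × Y2 → ℝ) : X → Y1 → ℝ :=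
  fun x y1 => ∑ y2, W x (y1, y2)

/-- Marginal channel to receiver 2 of a broadcast channel. -/
def margW2 {X Y1 Y2 : Type} [Fintype Y1] (W : X → Y1 × Y2 → ℝ) : X → Y2 → ℝ :=
  fun x y2 => ∑ y1, W x (y1, y2)

/-- Memoryless `n`-fold extension of a broadcast channel. -/
def nFold {X Y1 Y2 : Type} (W : X → Y1 × Y2 → ℝ) (n : ℕ)
    (x : Fin n → X) (y : (Fin n → Y1) × (Fin n → Y2)) : ℝ :=
  ∏ t, W (x t) (y.1 t, y.2 t)

section Channel

variable {X Y1 Y2 : Type} [Fintype Y1] [Fintype Y2]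

/-- Average error probability; message `M2` known at receiver 1. -/
def errP1 (W : X → Y1 × Y2 → ℝ) (n k1 k2 : ℕ) (f : Fin k1 × Fin k2 → Fin n → X)
    (g1 : (Fin n → Y1) × Fin k2 → Fin k1) (g2 : (Fin n → Y2) → Fin k2) : ℝ :=
  (1 : ℝ) / ((k1 : ℝ) * (k2 : ℝ)) *
    ∑ m : Fin k1 × Fin k2, ∑ y : (Fin n → Y1) × (Fin n → Y2),
      nFold W n (f m) y * (if g1 (y.1, m.2) = m.1 ∧ g2 y.2 = m.2 then 0 else 1)

/-- Average error probability; message `M1` known at receiver 2. -/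
def errP2 (W : X → Y1 × Y2 → ℝ) (n k1 k2 : ℕ) (f : Fin k1 × Fin k2 → Fin n → X)
    (g1 : (Fin n → Y1) → Fin k1) (g2 : (Fin n → Y2) × Fin k1 → Fin k2) : ℝ :=
  (1 : ℝ) / ((k1 : ℝ) * (k2 : ℝ)) *
    ∑ m : Fin k1 × Fin k2, ∑ y : (Fin n → Y1) × (Fin n → Y2),
      nFold W n (f m) y * (if g1 y.1 = m.1 ∧ g2 (y.2, m.1) = m.2 then 0 else 1)

/-- Average error probability; no receiver side information. -/
def errP0 (W : X → Y1 × Y2 → ℝ) (n k1 k2 : ℕ) (f : Fin k1 × Fin k2 → Fin n → X)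
    (g1 : (Fin n → Y1) → Fin k1) (g2 : (Fin n → Y2) → Fin k2) : ℝ :=
  (1 : ℝ) / ((k1 : ℝ) * (k2 : ℝ)) *
    ∑ m : Fin k1 × Fin k2, ∑ y : (Fin n → Y1) × (Fin n → Y2),
      nFold W n (f m) y * (if g1 y.1 = m.1 ∧ g2 y.2 = m.2 then 0 else 1)

/-- Achievability of a rate pair with `M2` available at receiver 1. -/
def Ach1 (W : X → Y1 × Y2 → ℝ) (R : ℝ × ℝ) : Prop :=
  0 ≤ R.1 ∧ 0 ≤ R.2 ∧ ∀ ε : ℝ, 0 < ε →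
    ∃ (n k1 k2 : ℕ), 0 < n ∧ 0 < k1 ∧ 0 < k2 ∧
      ∃ (f : Fin k1 × Fin k2 → Fin n → X) (g1 : (Fin n → Y1) × Fin k2 → Fin k1)
        (g2 : (Fin n → Y2) → Fin k2),
        R.1 ≤ Real.logb 2 (k1 : ℝ) / (n : ℝ) ∧ R.2 ≤ Real.logb 2 (k2 : ℝ) / (n : ℝ) ∧
        errP1 W n k1 k2 f g1 g2 ≤ ε

/-- Achievability of a rate pair with `M1` available at receiver 2. -/
def Ach2 (W : X → Y1 × Y2 → ℝ) (R : ℝ × ℝ) : Prop :=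
  0 ≤ R.1 ∧ 0 ≤ R.2 ∧ ∀ ε : ℝ, 0 < ε →
    ∃ (n k1 k2 : ℕ), 0 < n ∧ 0 < k1 ∧ 0 < k2 ∧
      ∃ (f : Fin k1 × Fin k2 → Fin n → X) (g1 : (Fin n → Y1) → Fin k1)
        (g2 : (Fin n → Y2) × Fin k1 → Fin k2),
        R.1 ≤ Real.logb 2 (k1 : ℝ) / (n : ℝ) ∧ R.2 ≤ Real.logb 2 (k2 : ℝ) / (n : ℝ) ∧
        errP2 W n k1 k2 f g1 g2 ≤ ε

/-- Achievability of a rate pair with no receiver side information. -/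
def Ach0 (W : X → Y1 × Y2 → ℝ) (R : ℝ × ℝ) : Prop :=
  0 ≤ R.1 ∧ 0 ≤ R.2 ∧ ∀ ε : ℝ, 0 < ε →
    ∃ (n k1 k2 : ℕ), 0 < n ∧ 0 < k1 ∧ 0 < k2 ∧
      ∃ (f : Fin k1 × Fin k2 → Fin n → X) (g1 : (Fin n → Y1) → Fin k1)
        (g2 : (Fin n → Y2) → Fin k2),
        R.1 ≤ Real.logb 2 (k1 : ℝ) / (n : ℝ) ∧ R.2 ≤ Real.logb 2 (k2 : ℝ) / (n : ℝ) ∧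
        errP0 W n k1 k2 f g1 g2 ≤ ε

/-- Capacity region `𝒞₁`: side information `M2` at receiver 1. -/
def Cap1 (W : X → Y1 × Y2 → ℝ) : Set (ℝ × ℝ) := closure {R | Ach1 W R}

/-- Capacity region `𝒞₂`: side information `M1` at receiver 2. -/
def Cap2 (W : X → Y1 × Y2 → ℝ) : Set (ℝ × ℝ) := closure {R | Ach2 W R}

/-- Private-message capacity region `𝒞`. -/
def Cap (W : X → Y1 × Y2 → ℝ) : Set (ℝ × ℝ) := closure {R | Ach0 W R}

end Channel

/-- `κ·𝒜` for a set of rate pairs. -/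
def scaleSet (κ : ℝ) (A : Set (ℝ × ℝ)) : Set (ℝ × ℝ) :=
  (fun R : ℝ × ℝ => (κ * R.1, κ * R.2)) '' A

/-- Binary entropy function (base 2). -/
def Hb (x : ℝ) : ℝ := -(x * Real.logb 2 x) - (1 - x) * Real.logb 2 (1 - x)

/-- Binary convolution `a*b = a(1-b)+(1-a)b`. -/
def bconv (a b : ℝ) : ℝ := a * (1 - b) + (1 - a) * b

/-- The region `𝒞(BS-BC(d₁,d₂))`. -/
def CBSBC (d1 d2 : ℝ) : Set (ℝ × ℝ) :=
  {R | 0 ≤ R.1 ∧ 0 ≤ R.2 ∧ ∃ α ∈ Set.Icc (0:ℝ) (1/2),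
    R.1 ≤ Hb (bconv α d1) - Hb d1 ∧ R.2 ≤ 1 - Hb (bconv α d2)}

/-- The region `𝒞(BE-BC(ε₁,ε₂))`. -/
def CBEBC (e1 e2 : ℝ) : Set (ℝ × ℝ) :=
  {R | 0 ≤ R.1 ∧ 0 ≤ R.2 ∧ ∃ β ∈ Set.Icc (0:ℝ) 1,
    R.1 ≤ β * (1 - e1) ∧ R.2 ≤ (1 - β) * (1 - e2)}

/-- 1-norm distance between two functions on a finite type. -/
def l1dist {α : Type} [Fintype α] (p q : α → ℝ) : ℝ := ∑ a, |p a - q a|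

/-- Capacity `C(p_{Y|X}) = max_{p_X} I(X;Y)` of a point-to-point channel. -/
def Cmarg {X Y : Type} [Fintype X] [Fintype Y] (Wm : X → Y → ℝ) : ℝ :=
  sSup {r | ∃ pX : X → ℝ, IsPMF pX ∧ r = MI (fun a : X × Y => pX a.1 * Wm a.1 a.2)}

section SystemPi

variable {S X Y1 Y2 US1 US2 : Type}
variable [Fintype S] [Fintype Y1] [Fintype Y2] [Fintype US1] [Fintype US2]

/-- Probability of a source block under an i.i.d. source. -/
def srcProd (pS : S → ℝ) (m : ℕ) (s : Fin m → S) : ℝ := ∏ t, pS (s t)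

/-- Joint pmf of `(S(t), Ŝ₁(t))` induced by a code for System Π. -/
def jointPi1 (pS : S → ℝ) (W : X → Y1 × Y2 → ℝ) (m n : ℕ)
    (f : (Fin m → S) → Fin n → X) (g1 : (Fin n → Y1) → Fin m → US1) (t : Fin m) :
    S × US1 → ℝ :=
  fun a => ∑ s : Fin m → S, ∑ y : (Fin n → Y1) × (Fin n → Y2),
    srcProd pS m s * nFold W n (f s) y * (if s t = a.1 ∧ g1 y.1 t = a.2 then 1 else 0)

/-- Joint pmf of `(S(t), Ŝ₂(t))` induced by a code for System Π. -/
def jointPi2 (pS : S → ℝ) (W : X → Y1 × Y2 → ℝ) (m n : ℕ)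
    (f : (Fin m → S) → Fin n → X) (g2 : (Fin n → Y2) → Fin m → US2) (t : Fin m) :
    S × US2 → ℝ :=
  fun a => ∑ s : Fin m → S, ∑ y : (Fin n → Y1) × (Fin n → Y2),
    srcProd pS m s * nFold W n (f s) y * (if s t = a.1 ∧ g2 y.2 t = a.2 then 1 else 0)

/-- Time-averaged joint pmf `(1/m)∑_t p_{S(t),Ŝ₁(t)}`. -/
def avgJoint1 (pS : S → ℝ) (W : X → Y1 × Y2 → ℝ) (m n : ℕ)
    (f : (Fin m → S) → Fin n → X) (g1 : (Fin n → Y1) → Fin m → US1) :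
    S × US1 → ℝ :=
  fun a => (1 / (m : ℝ)) * ∑ t, jointPi1 pS W m n f g1 t a

/-- Time-averaged joint pmf `(1/m)∑_t p_{S(t),Ŝ₂(t)}`. -/
def avgJoint2 (pS : S → ℝ) (W : X → Y1 × Y2 → ℝ) (m n : ℕ)
    (f : (Fin m → S) → Fin n → X) (g2 : (Fin n → Y2) → Fin m → US2) :
    S × US2 → ℝ :=
  fun a => (1 / (m : ℝ)) * ∑ t, jointPi2 pS W m n f g2 t a

/-- `(κ, 𝒬₁, 𝒬₂) ∈ Γ` : achievability for System Π (Definition 1). -/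
def InGamma (pS : S → ℝ) (W : X → Y1 × Y2 → ℝ)
    (Q1 : Set (S × US1 → ℝ)) (Q2 : Set (S × US2 → ℝ)) (κ : ℝ) : Prop :=
  ∀ ε : ℝ, 0 < ε → ∃ (m n : ℕ), 0 < m ∧
    ∃ (f : (Fin m → S) → Fin n → X) (g1 : (Fin n → Y1) → Fin m → US1)
      (g2 : (Fin n → Y2) → Fin m → US2),
      (n : ℝ) / (m : ℝ) ≤ κ + ε ∧
      (∃ q1 ∈ Q1, l1dist (avgJoint1 pS W m n f g1) q1 ≤ ε) ∧
      (∃ q2 ∈ Q2, l1dist (avgJoint2 pS W m n f g2) q2 ≤ ε)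

/-- `(κ, d₁, d₂)` achievable for System Π under distortion measures `w₁, w₂`
(Definition 2). -/
def AchDist (pS : S → ℝ) (W : X → Y1 × Y2 → ℝ)
    (w1 : S × US1 → ℝ) (w2 : S × US2 → ℝ) (κ d1 d2 : ℝ) : Prop :=
  ∀ ε : ℝ, 0 < ε → ∃ (m n : ℕ), 0 < m ∧
    ∃ (f : (Fin m → S) → Fin n → X) (g1 : (Fin n → Y1) → Fin m → US1)
      (g2 : (Fin n → Y2) → Fin m → US2),
      (n : ℝ) / (m : ℝ) ≤ κ + ε ∧
      ∑ a, avgJoint1 pS W m n f g1 a * w1 a ≤ d1 + ε ∧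
      ∑ a, avgJoint2 pS W m n f g2 a * w2 a ≤ d2 + ε

end SystemPi

section CodeDistributions

variable {S X Y1 Y2 U : Type} [Fintype Y1] [Fintype Y2] {pS : S → ℝ} {W : X → Y1 × Y2 → ℝ}

lemma nFold_nonneg (hW : IsChannel W) {n : ℕ} (x : Fin n → X)
    (y : (Fin n → Y1) × (Fin n → Y2)) : 0 ≤ nFold W n x y :=
  Finset.prod_nonneg fun t _ => (hW (x t)).1 _

lemma sum_nFold (hW : IsChannel W) {n : ℕ} (x : Fin n → X) :
    ∑ y, nFold W n x y = 1 := by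
  let e := Equiv.arrowProdEquivProdArrow (Fin n) (fun _ => Y1) (fun _ => Y2)
  calc ∑ y, nFold W n x y = ∑ z : Fin n → Y1 × Y2, ∏ t, W (x t) (z t) := (e.sum_comp _).symm
    _ = ∏ t, ∑ b, W (x t) b := (Fintype.prod_sum _).symm
    _ = 1 := Finset.prod_eq_one fun t _ => (hW (x t)).2

lemma srcProd_nonneg (hpS : ∀ s, 0 ≤ pS s) {m : ℕ} (s : Fin m → S) : 0 ≤ srcProd pS m s :=
  Finset.prod_nonneg fun t _ => hpS (s t)

lemma sum_srcProd_mul_ite [Fintype S] (hpS : IsPMF pS) {m : ℕ} (t : Fin m) (a : S) :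
    ∑ s, srcProd pS m s * (if s t = a then 1 else 0) = pS a := by
  have hprod : ∀ s : Fin m → S, srcProd pS m s * (if s t = a then 1 else 0) =
      ∏ t', pS (s t') * (if t' = t then (if s t' = a then 1 else 0) else 1) := by
    intro s
    rw [Finset.prod_mul_distrib, Finset.prod_ite_eq']
    simp [srcProd]
  simp_rw [hprod]
  rw [← Fintype.prod_sum (fun t' b => pS b * if t' = t then (if b = a then 1 else 0) else 1),
    Finset.prod_eq_single t (fun t' _ ht' => by simp [ht', hpS.2]) (by simp)]
  simp

/-- Common form of `avgJoint1` and `avgJoint2`: the reconstruction at time `t` is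
`G t (Y₁ⁿ, Y₂ⁿ)`. -/
def avgJoint [Fintype S] (pS : S → ℝ) (W : X → Y1 × Y2 → ℝ) (m n : ℕ)
    (f : (Fin m → S) → Fin n → X) (G : Fin m → (Fin n → Y1) × (Fin n → Y2) → U) : S × U → ℝ :=
  fun a => (1 / (m : ℝ)) * ∑ t, ∑ s : Fin m → S, ∑ y : (Fin n → Y1) × (Fin n → Y2),
    srcProd pS m s * nFold W n (f s) y * (if s t = a.1 ∧ G t y = a.2 then 1 else 0)

lemma avgJoint_nonneg [Fintype S] (hpS : ∀ s, 0 ≤ pS s) (hW : IsChannel W) {m n : ℕ}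
    (f : (Fin m → S) → Fin n → X) (G : Fin m → (Fin n → Y1) × (Fin n → Y2) → U)
    (a : S × U) : 0 ≤ avgJoint pS W m n f G a := by
  unfold avgJoint
  refine mul_nonneg (by positivity) (Finset.sum_nonneg fun t _ => Finset.sum_nonneg fun s _ =>
    Finset.sum_nonneg fun y _ => mul_nonneg (mul_nonneg ?_ ?_) (by positivity))
  exacts [srcProd_nonneg hpS s, nFold_nonneg hW (f s) y]

lemma sum_avgJoint_fiber [Fintype S] [Fintype U] (hpS : IsPMF pS) (hW : IsChannel W)
    {m n : ℕ} (hm : 0 < m) (f : (Fin m → S) → Fin n → X)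
    (G : Fin m → (Fin n → Y1) × (Fin n → Y2) → U) (a : S) :
    ∑ u, avgJoint pS W m n f G (a, u) = pS a := by
  have hfiber : ∀ t s y, ∑ u, srcProd pS m s * nFold W n (f s) y *
      (if s t = a ∧ G t y = u then 1 else 0) =
      srcProd pS m s * (if s t = a then 1 else 0) * nFold W n (f s) y := by
    intro t s y
    rw [← Finset.mul_sum]
    by_cases h : s t = a <;> simp [h]
  have ht : ∀ t, ∑ s, ∑ y, srcProd pS m s * (if s t = a then 1 else 0) * nFold W n (f s) y =
      pS a := by
    intro t
    simp_rw [← Finset.mul_sum, sum_nFold hW, mul_one]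
    exact sum_srcProd_mul_ite hpS t a
  unfold avgJoint
  rw [← Finset.mul_sum]
  simp_rw [Finset.sum_comm (γ := U), hfiber, ht]
  simp [hm.ne']

end CodeDistributions

section Distortion

variable {S U : Type} [Fintype U]

lemma isPMF_of_sum_fiber [Fintype S] {pS : S → ℝ} (hpS : IsPMF pS) {q : S × U → ℝ}
    (hq : ∀ a, 0 ≤ q a) (hfiber : ∀ s, ∑ u, q (s, u) = pS s) : IsPMF q :=
  ⟨hq, by rw [Fintype.sum_prod_type]; simp_rw [hfiber]; exact hpS.2⟩

lemma sum_mul_comp_fst [Fintype S] {pS : S → ℝ} {q : S × U → ℝ}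
    (hfiber : ∀ s, ∑ u, q (s, u) = pS s) (φ : S → ℝ) : ∑ a, q a * φ a.1 = ∑ s, pS s * φ s := by
  simp_rw [Fintype.sum_prod_type, ← hfiber, Finset.sum_mul]

lemma sub_le_l1dist_mul {α : Type} [Fintype α] (p q w : α → ℝ) :
    ∑ a, p a * w a - ∑ a, q a * w a ≤ l1dist p q * ∑ a, |w a| := by
  rw [← Finset.sum_sub_distrib, l1dist, Finset.sum_mul]
  refine Finset.sum_le_sum fun a _ => ?_
  calc p a * w a - q a * w a ≤ |p a - q a| * |w a| := by
        rw [← sub_mul, ← abs_mul]; exact le_abs_self _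
    _ ≤ |p a - q a| * ∑ b, |w b| :=
        mul_le_mul_of_nonneg_left (Finset.single_le_sum (fun b _ => abs_nonneg (w b))
          (Finset.mem_univ a)) (abs_nonneg _)

def fiberMin (w : S × U → ℝ) (s : S) : ℝ := ⨅ u, w (s, u)

lemma fiberMin_le (w : S × U → ℝ) (a : S × U) : fiberMin w a.1 ≤ w a :=
  ciInf_le (Set.finite_range _).bddBelow a.2

lemma sum_mul_fiberMin_le [Fintype S] {pS : S → ℝ} {q : S × U → ℝ} (hq : ∀ a, 0 ≤ q a)
    (hfiber : ∀ s, ∑ u, q (s, u) = pS s) (w : S × U → ℝ) :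
    ∑ s, pS s * fiberMin w s ≤ ∑ a, q a * w a := by
  rw [← sum_mul_comp_fst hfiber]
  exact Finset.sum_le_sum fun a _ => mul_le_mul_of_nonneg_left (fiberMin_le w a) (hq a)

lemma exists_pos_le_of_pos {α : Type} [Finite α] (g : α → ℝ) :
    ∃ c > 0, ∀ a, 0 < g a → c ≤ g a := by
  rcases isEmpty_or_nonempty α with hα | hα
  · exact ⟨1, one_pos, fun a => isEmptyElim a⟩
  obtain ⟨a₀, ha₀⟩ := Finite.exists_min fun a => if 0 < g a then g a else 1
  refine ⟨if 0 < g a₀ then g a₀ else 1, by split_ifs <;> linarith, fun a ha => ?_⟩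
  simpa [ha] using ha₀ a

def moveMass (p r : S × U → ℝ) (σ : S → U) (t : ℝ) : S × U → ℝ :=
  fun a => p a - t * r a + if a.2 = σ a.1 then t * ∑ u, r (a.1, u) else 0

variable {p r : S × U → ℝ} {σ : S → U} {t : ℝ}

lemma moveMass_nonneg (hr : ∀ a, 0 ≤ r a) (hrp : ∀ a, r a ≤ p a) (ht0 : 0 ≤ t) (ht1 : t ≤ 1)
    (a : S × U) : 0 ≤ moveMass p r σ t a := by
  have hmove : 0 ≤ p a - t * r a := by nlinarith [hr a, hrp a]
  have hgain : 0 ≤ t * ∑ u, r (a.1, u) :=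
    mul_nonneg ht0 (Finset.sum_nonneg fun u _ => hr _)
  unfold moveMass
  split_ifs <;> linarith

lemma sum_moveMass_fiber (s : S) : ∑ u, moveMass p r σ t (s, u) = ∑ u, p (s, u) := by
  simp [moveMass, Finset.sum_add_distrib, Finset.sum_sub_distrib, ← Finset.mul_sum]

lemma sum_moveMass_mul [Fintype S] (w : S × U → ℝ) :
    ∑ a, moveMass p r σ t a * w a =
      ∑ a, p a * w a - t * ∑ a, r a * (w a - w (a.1, σ a.1)) := by
  have hgain : ∑ a : S × U, (if a.2 = σ a.1 then t * ∑ u, r (a.1, u) else 0) * w a =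
      t * ∑ a, r a * w (a.1, σ a.1) := by
    simp [Fintype.sum_prod_type, Finset.mul_sum, Finset.sum_mul, ite_mul, mul_assoc]
  simp only [moveMass, add_mul, sub_mul, Finset.sum_add_distrib, Finset.sum_sub_distrib, hgain]
  simp only [mul_sub, Finset.sum_sub_distrib, Finset.mul_sum, mul_assoc]
  ring

lemma l1dist_moveMass_le [Fintype S] (hr : ∀ a, 0 ≤ r a) (ht0 : 0 ≤ t) :
    l1dist p (moveMass p r σ t) ≤ 2 * t * ∑ a, r a := by
  have hpt : ∀ a, |p a - moveMass p r σ t a| ≤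
      t * r a + if a.2 = σ a.1 then t * ∑ u, r (a.1, u) else 0 := by
    intro a
    have hgain : 0 ≤ t * ∑ u, r (a.1, u) := mul_nonneg ht0 (Finset.sum_nonneg fun u _ => hr _)
    have := mul_nonneg ht0 (hr a)
    unfold moveMass
    split_ifs <;> rw [abs_le] <;> constructor <;> linarith
  calc l1dist p (moveMass p r σ t)
      ≤ ∑ a : S × U, (t * r a + if a.2 = σ a.1 then t * ∑ u, r (a.1, u) else 0) :=
        Finset.sum_le_sum fun a _ => hpt a
    _ = 2 * t * ∑ a, r a := by
        simp [Finset.sum_add_distrib, Fintype.sum_prod_type, ← Finset.mul_sum]; ring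

/-- The set `𝒬(w, d)` of the paper. -/
def distortionSet [Fintype S] (pS : S → ℝ) (w : S × U → ℝ) (d : ℝ) : Set (S × U → ℝ) :=
  {q | IsPMF q ∧ (∀ s, ∑ u, q (s, u) = pS s) ∧ ∑ a, q a * w a ≤ d}

/-- Moving mass off the non-minimisers of `w(s, ·)` lowers the distortion by at least the least
positive gap `c` per unit, so excess distortion `D - d` costs at most `2 (D - d) / c` in 1-norm. -/
lemma exists_mem_distortionSet_l1dist_le [Fintype S] [Nonempty U] {pS : S → ℝ}
    (hpS : IsPMF pS) (w : S × U → ℝ) {d : ℝ} (hd : ∑ s, pS s * fiberMin w s ≤ d) {ε : ℝ}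
    (hε : 0 < ε) :
    ∃ δ > 0, ∀ p : S × U → ℝ, (∀ a, 0 ≤ p a) → (∀ s, ∑ u, p (s, u) = pS s) →
      ∑ a, p a * w a ≤ d + δ → ∃ q ∈ distortionSet pS w d, l1dist p q ≤ ε := by
  choose σ hσ using fun s => exists_eq_ciInf_of_finite (f := fun u => w (s, u))
  replace hσ : ∀ s, w (s, σ s) = fiberMin w s := hσ
  obtain ⟨c, hc, hgap⟩ := exists_pos_le_of_pos fun a : S × U => w a - fiberMin w a.1
  refine ⟨ε * c / 2, by positivity, fun p hp hfiber hcost => ?_⟩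
  by_cases hle : ∑ a, p a * w a ≤ d
  · exact ⟨p, ⟨isPMF_of_sum_fiber hpS hp hfiber, hfiber, hle⟩, by simp [l1dist, hε.le]⟩
  rw [not_le] at hle
  set D := ∑ a, p a * w a
  set r : S × U → ℝ := fun a => if fiberMin w a.1 < w a then p a else 0
  set G := ∑ a, r a * (w a - w (a.1, σ a.1))
  have hr : ∀ a, 0 ≤ r a := fun a => by simp only [r]; split_ifs <;> simp [hp a]
  have hrp : ∀ a, r a ≤ p a := fun a => by simp only [r]; split_ifs <;> simp [hp a]
  have hG : G = D - ∑ s, pS s * fiberMin w s := by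
    rw [← sum_mul_comp_fst hfiber, ← Finset.sum_sub_distrib]
    refine Finset.sum_congr rfl fun a _ => ?_
    simp only [r, hσ]
    split_ifs with h
    · ring
    · rw [le_antisymm (not_lt.1 h) (fiberMin_le w a)]; ring
  have hmass : c * ∑ a, r a ≤ G := by
    rw [Finset.mul_sum]
    refine Finset.sum_le_sum fun a _ => ?_
    simp only [r, hσ]
    split_ifs with h
    · rw [mul_comm]
      exact mul_le_mul_of_nonneg_left (hgap a (sub_pos.2 h)) (hp a)
    · simp
  have hGpos : 0 < G := by linarith
  set t := (D - d) / G
  have htG : t * G = D - d := div_mul_cancel₀ _ hGpos.ne'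
  have ht0 : 0 ≤ t := div_nonneg (by linarith) hGpos.le
  have ht1 : t ≤ 1 := (div_le_one hGpos).2 (by linarith)
  have hq0 := moveMass_nonneg (σ := σ) hr hrp ht0 ht1
  have hqfiber : ∀ s, ∑ u, moveMass p r σ t (s, u) = pS s :=
    fun s => (sum_moveMass_fiber s).trans (hfiber s)
  refine ⟨moveMass p r σ t, ⟨isPMF_of_sum_fiber hpS hq0 hqfiber, hqfiber, ?_⟩, ?_⟩
  · rw [sum_moveMass_mul, htG]
    linarith
  · calc l1dist p (moveMass p r σ t) ≤ 2 * t * ∑ a, r a := l1dist_moveMass_le hr ht0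
      _ ≤ 2 * (D - d) / c := by
        rw [le_div_iff₀ hc, ← htG]
        nlinarith
      _ ≤ ε := by
        rw [div_le_iff₀ hc]
        linarith

end Distortion

section SystemPiDistortion

variable {S X Y1 Y2 US1 US2 : Type} [Fintype S] [Fintype Y1] [Fintype Y2] [Fintype US1]
  [Fintype US2] {pS : S → ℝ} {W : X → Y1 × Y2 → ℝ} {w1 : S × US1 → ℝ} {w2 : S × US2 → ℝ}
  {κ d1 d2 : ℝ}

lemma inGamma_of_achDist [Nonempty US1] [Nonempty US2] (hpS : IsPMF pS) (hW : IsChannel W)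
    (h : AchDist pS W w1 w2 κ d1 d2) :
    InGamma pS W (distortionSet pS w1 d1) (distortionSet pS w2 d2) κ := by
  have hmin1 : ∑ s, pS s * fiberMin w1 s ≤ d1 := le_of_forall_pos_le_add fun ε hε => by
    obtain ⟨m, n, hm, f, g1, -, -, hcost, -⟩ := h ε hε
    exact (sum_mul_fiberMin_le (avgJoint_nonneg hpS.1 hW f _)
      (sum_avgJoint_fiber hpS hW hm f _) w1).trans hcost
  have hmin2 : ∑ s, pS s * fiberMin w2 s ≤ d2 := le_of_forall_pos_le_add fun ε hε => by
    obtain ⟨m, n, hm, f, -, g2, -, -, hcost⟩ := h ε hε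
    exact (sum_mul_fiberMin_le (avgJoint_nonneg hpS.1 hW f _)
      (sum_avgJoint_fiber hpS hW hm f _) w2).trans hcost
  intro ε hε
  obtain ⟨δ1, hδ1, hnear1⟩ := exists_mem_distortionSet_l1dist_le hpS w1 hmin1 hε
  obtain ⟨δ2, hδ2, hnear2⟩ := exists_mem_distortionSet_l1dist_le hpS w2 hmin2 hε
  obtain ⟨m, n, hm, f, g1, g2, hrate, hcost1, hcost2⟩ := h (min ε (min δ1 δ2)) (by positivity)
  have hε' : min ε (min δ1 δ2) ≤ ε := min_le_left _ _
  have hδ1' : min ε (min δ1 δ2) ≤ δ1 := (min_le_right _ _).trans (min_le_left _ _)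
  have hδ2' : min ε (min δ1 δ2) ≤ δ2 := (min_le_right _ _).trans (min_le_right _ _)
  refine ⟨m, n, hm, f, g1, g2, by linarith, ?_, ?_⟩
  · exact hnear1 _ (avgJoint_nonneg hpS.1 hW f _) (sum_avgJoint_fiber hpS hW hm f _)
      (by linarith)
  · exact hnear2 _ (avgJoint_nonneg hpS.1 hW f _) (sum_avgJoint_fiber hpS hW hm f _)
      (by linarith)

lemma achDist_of_inGamma (h : InGamma pS W (distortionSet pS w1 d1) (distortionSet pS w2 d2) κ) :
    AchDist pS W w1 w2 κ d1 d2 := by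
  intro ε hε
  set B1 := ∑ a, |w1 a|
  set B2 := ∑ a, |w2 a|
  have hB1 : 0 ≤ B1 := Finset.sum_nonneg fun a _ => abs_nonneg _
  have hB2 : 0 ≤ B2 := Finset.sum_nonneg fun a _ => abs_nonneg _
  set δ := ε / (B1 + B2 + 1)
  have hδ : 0 < δ := by positivity
  have hδB : δ * (B1 + B2 + 1) = ε := div_mul_cancel₀ _ (by positivity)
  obtain ⟨m, n, hm, f, g1, g2, hrate, ⟨q1, hq1, hdist1⟩, ⟨q2, hq2, hdist2⟩⟩ := h δ hδ
  have hδε : δ ≤ ε ∧ δ * B1 ≤ ε ∧ δ * B2 ≤ ε := by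
    refine ⟨?_, ?_, ?_⟩ <;> nlinarith [mul_nonneg hδ.le hB1, mul_nonneg hδ.le hB2]
  have herr1 := sub_le_l1dist_mul (avgJoint1 pS W m n f g1) q1 w1
  have herr2 := sub_le_l1dist_mul (avgJoint2 pS W m n f g2) q2 w2
  have hl1 := mul_le_mul_of_nonneg_right hdist1 hB1
  have hl2 := mul_le_mul_of_nonneg_right hdist2 hB2
  refine ⟨m, n, hm, f, g1, g2, ?_, ?_, ?_⟩ <;> linarith [hq1.2.2, hq2.2.2]

end SystemPiDistortion

theorem distortion_iff_inGamma_general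
    {S X Y1 Y2 US1 US2 : Type}
    [Fintype S] [Fintype Y1] [Fintype Y2] [Fintype US1] [Fintype US2]
    [Nonempty US1] [Nonempty US2]
    (pS : S → ℝ) (hpS : IsPMF pS)
    (W : X → Y1 × Y2 → ℝ) (hW : IsChannel W)
    (w1 : S × US1 → ℝ) (w2 : S × US2 → ℝ)
    (κ d1 d2 : ℝ) :
    AchDist pS W w1 w2 κ d1 d2 ↔
      InGamma pS W
        {q : S × US1 → ℝ | IsPMF q ∧ (∀ s, ∑ u, q (s, u) = pS s) ∧ ∑ a, q a * w1 a ≤ d1}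
        {q : S × US2 → ℝ | IsPMF q ∧ (∀ s, ∑ u, q (s, u) = pS s) ∧ ∑ a, q a * w2 a ≤ d2}
        κ :=
  ⟨inGamma_of_achDist hpS hW, achDist_of_inGamma⟩

/-- **Proposition 1.** `(κ,d₁,d₂)` is achievable for System Π under distortion
measures `w₁` and `w₂` iff `(κ, 𝒬(w₁,d₁), 𝒬(w₂,d₂)) ∈ Γ`. -/
theorem distortion_iff_inGamma
    {S X Y1 Y2 US1 US2 : Type}
    [Fintype S] [Fintype X] [Fintype Y1] [Fintype Y2] [Fintype US1] [Fintype US2]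
    [Nonempty X] [Nonempty US1] [Nonempty US2]
    (pS : S → ℝ) (hpS : IsPMF pS)
    (W : X → Y1 × Y2 → ℝ) (hW : IsChannel W)
    (w1 : S × US1 → ℝ) (w2 : S × US2 → ℝ)
    (hw1 : ∀ a, 0 ≤ w1 a) (hw2 : ∀ a, 0 ≤ w2 a)
    (κ d1 d2 : ℝ) (hκ : 0 ≤ κ) (hd1 : 0 ≤ d1) (hd2 : 0 ≤ d2) :
    AchDist pS W w1 w2 κ d1 d2 ↔
      InGamma pS W
        {q : S × US1 → ℝ | IsPMF q ∧ (∀ s, ∑ u, q (s, u) = pS s) ∧ ∑ a, q a * w1 a ≤ d1}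
        {q : S × US2 → ℝ | IsPMF q ∧ (∀ s, ∑ u, q (s, u) = pS s) ∧ ∑ a, q a * w2 a ≤ d2}
        κ :=
  distortion_iff_inGamma_general pS hpS W hW w1 w2 κ d1 d2

end
end

section
/- Let 0 ≤ d_1 ≤ d_2 ≤ 1/2 and 0 ≤ ε_1 ≤ ε_2 < 1. Then the minimum min{κ ≥ 0 : 𝒞(BS-BC(d_1,d_2)) ⊆ κ·𝒞(BE-BC(ε_1,ε_2))} exists and equals max_{α ∈ [0,1/2]} [ (H_b(α*d_1) − H_b(d_1))/(1−ε_1) + (1 − H_b(α*d_2))/(1−ε_2) ]. -/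
open scoped BigOperators Classical
open Finset

noncomputable section

lemma Hb_eq (x : ℝ) : Hb x = Real.binEntropy x / Real.log 2 := by
  simp only [Hb, Real.binEntropy, Real.logb, Real.log_inv]; ring

lemma Hb_cont : Continuous Hb := by
  have : Hb = fun x => Real.binEntropy x / Real.log 2 := funext Hb_eq
  rw [this]; exact Real.binEntropy_continuous.div_const _

lemma Hb_le_one (x : ℝ) : Hb x ≤ 1 := by
  rw [Hb_eq, div_le_one (Real.log_pos (by norm_num))]
  exact Real.binEntropy_le_log_two

lemma Hb_mono {a b : ℝ} (ha : 0 ≤ a) (hab : a ≤ b) (hb : b ≤ 1/2) : Hb a ≤ Hb b := by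
  rw [Hb_eq, Hb_eq, div_le_div_iff_of_pos_right (Real.log_pos (by norm_num))]
  exact Real.binEntropy_strictMonoOn.monotoneOn
    ⟨ha, by linarith [hab, hb]⟩ ⟨le_trans ha hab, by norm_num; linarith⟩ hab

lemma bconv_mem {α d : ℝ} (hα0 : 0 ≤ α) (hα : α ≤ 1/2) (hd : d ≤ 1/2) :
    d ≤ bconv α d ∧ bconv α d ≤ 1/2 := by
  constructor <;> simp only [bconv] <;> nlinarith

/-- **Equation (35).** The minimal bandwidth-expansion factor for which
`𝒞(BS-BC(d₁,d₂)) ⊆ κ·𝒞(BE-BC(ε₁,ε₂))` exists and equals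
`max_{α∈[0,1/2]} (H_b(α*d₁)−H_b(d₁))/(1−ε₁) + (1−H_b(α*d₂))/(1−ε₂)`. -/
theorem kappaStar_bsbc_bebc
    (d1 d2 e1 e2 : ℝ) (hd0 : 0 ≤ d1) (hd12 : d1 ≤ d2) (hd2 : d2 ≤ 1/2)
    (he0 : 0 ≤ e1) (he12 : e1 ≤ e2) (he2 : e2 < 1) :
    ∃ κ0 : ℝ,
      IsLeast {κ : ℝ | 0 ≤ κ ∧ CBSBC d1 d2 ⊆ scaleSet κ (CBEBC e1 e2)} κ0 ∧
      IsGreatest {v : ℝ | ∃ α ∈ Set.Icc (0:ℝ) (1/2),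
        v = (Hb (bconv α d1) - Hb d1) / (1 - e1)
              + (1 - Hb (bconv α d2)) / (1 - e2)} κ0 := by
  have hu : (0:ℝ) < 1 - e1 := by linarith
  have hv : (0:ℝ) < 1 - e2 := by linarith
  have hd1half : d1 ≤ 1/2 := le_trans hd12 hd2
  have hfcont : Continuous (fun α : ℝ =>
      (Hb (bconv α d1) - Hb d1) / (1 - e1) + (1 - Hb (bconv α d2)) / (1 - e2)) := by
    apply Continuous.add
    · exact ((Hb_cont.comp (by continuity : Continuous fun α => bconv α d1)).sub
        continuous_const).div_const _
    · exact (continuous_const.sub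
        (Hb_cont.comp (by continuity : Continuous fun α => bconv α d2))).div_const _
  have hT1 : ∀ α ∈ Set.Icc (0:ℝ) (1/2), 0 ≤ Hb (bconv α d1) - Hb d1 := by
    intro α hα
    have h := bconv_mem hα.1 hα.2 hd1half
    have := Hb_mono hd0 h.1 h.2
    linarith
  have hT2 : ∀ α : ℝ, 0 ≤ 1 - Hb (bconv α d2) := fun α => by linarith [Hb_le_one (bconv α d2)]
  obtain ⟨α0, hα0, hmax'⟩ := (isCompact_Icc (a := (0:ℝ)) (b := 1/2)).exists_isMaxOn
    (Set.nonempty_Icc.mpr (by norm_num)) hfcont.continuousOn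
  obtain ⟨κ0, hκ0def⟩ : ∃ κ0 : ℝ, κ0 = (Hb (bconv α0 d1) - Hb d1) / (1 - e1)
      + (1 - Hb (bconv α0 d2)) / (1 - e2) := ⟨_, rfl⟩
  have hmax : ∀ α ∈ Set.Icc (0:ℝ) (1/2),
      (Hb (bconv α d1) - Hb d1) / (1 - e1) + (1 - Hb (bconv α d2)) / (1 - e2) ≤ κ0 := by
    intro α hα
    rw [hκ0def]
    exact hmax' hα

  have hκ0n : 0 ≤ κ0 := by
    have := div_nonneg (hT1 α0 hα0) hu.le
    have := div_nonneg (hT2 α0) hv.le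
    rw [hκ0def]; linarith
  refine ⟨κ0, ⟨⟨hκ0n, ?_⟩, ?_⟩, ⟨α0, hα0, hκ0def⟩, ?_⟩
  · -- subset
    rintro ⟨R1, R2⟩ ⟨hR1, hR2, α, hα, h1, h2⟩
    simp only at hR1 hR2 h1 h2
    have hfα : (Hb (bconv α d1) - Hb d1) / (1 - e1) + (1 - Hb (bconv α d2)) / (1 - e2)
        ≤ κ0 := hmax α hα
    rcases eq_or_lt_of_le hκ0n with hz | hpos
    · -- κ0 = 0
      rw [← hz] at hfα
      have hq1 := div_nonneg (hT1 α hα) hu.le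
      have hq2 := div_nonneg (hT2 α) hv.le
      have ht1 : (Hb (bconv α d1) - Hb d1) / (1 - e1) ≤ 0 := by linarith
      have ht2 : (1 - Hb (bconv α d2)) / (1 - e2) ≤ 0 := by linarith
      have hT1z : Hb (bconv α d1) - Hb d1 ≤ 0 := by
        nlinarith [div_mul_cancel₀ (Hb (bconv α d1) - Hb d1) hu.ne']
      have hT2z : 1 - Hb (bconv α d2) ≤ 0 := by
        nlinarith [div_mul_cancel₀ (1 - Hb (bconv α d2)) hv.ne']
      have hR1z : R1 = 0 := le_antisymm (by linarith) hR1
      have hR2z : R2 = 0 := le_antisymm (by linarith) hR2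
      refine ⟨(0, 0), ⟨le_refl 0, le_refl 0, 0, ⟨le_refl 0, zero_le_one⟩, ?_, ?_⟩, ?_⟩
      · norm_num
      · norm_num; linarith
      · rw [← hz]; simp [hR1z, hR2z]
    · -- κ0 > 0
      have hKey : R1 * (1 - e2) + R2 * (1 - e1) ≤ κ0 * ((1 - e1) * (1 - e2)) := by
        have hid : (Hb (bconv α d1) - Hb d1) * (1 - e2) + (1 - Hb (bconv α d2)) * (1 - e1)
            = ((Hb (bconv α d1) - Hb d1) / (1 - e1) + (1 - Hb (bconv α d2)) / (1 - e2))
              * ((1 - e1) * (1 - e2)) := by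
          field_simp
          try ring
        nlinarith [mul_le_mul_of_nonneg_right h1 hv.le,
          mul_le_mul_of_nonneg_right h2 hu.le,
          mul_le_mul_of_nonneg_right hfα (mul_nonneg hu.le hv.le)]
      have hβle : R1 ≤ κ0 * (1 - e1) := by
        nlinarith [mul_nonneg hR2 hu.le]
      refine ⟨(R1 / κ0, R2 / κ0),
        ⟨div_nonneg hR1 hκ0n, div_nonneg hR2 hκ0n,
          R1 / (κ0 * (1 - e1)),
          ⟨div_nonneg hR1 (mul_nonneg hκ0n hu.le), by
            rw [div_le_one (by positivity)]; exact hβle⟩,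
          le_of_eq (by field_simp), ?_⟩, ?_⟩
      · rw [div_le_iff₀ hpos]
        have heq2 : (1 - R1 / (κ0 * (1 - e1))) * (1 - e2) * κ0
            = (κ0 * ((1 - e1) * (1 - e2)) - R1 * (1 - e2)) / (1 - e1) := by
          field_simp
        rw [heq2, le_div_iff₀ hu]
        linarith
      · simp only [Prod.mk.injEq]
        constructor <;> rw [mul_div_cancel₀] <;> exact hpos.ne'
  · -- lower bound
    rintro κ ⟨hκn, hsub⟩
    have hmem : ((Hb (bconv α0 d1) - Hb d1, 1 - Hb (bconv α0 d2)) : ℝ × ℝ) ∈ CBSBC d1 d2 :=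
      ⟨hT1 α0 hα0, hT2 α0, α0, hα0, le_refl _, le_refl _⟩
    obtain ⟨⟨a1, a2⟩, ⟨ha1, ha2, β, hβ, hb1, hb2⟩, heq⟩ := hsub hmem
    have e1' : Hb (bconv α0 d1) - Hb d1 = κ * a1 := (congrArg Prod.fst heq).symm
    have e2' : 1 - Hb (bconv α0 d2) = κ * a2 := (congrArg Prod.snd heq).symm
    have k1 : (Hb (bconv α0 d1) - Hb d1) / (1 - e1) ≤ κ * β := by
      rw [e1', div_le_iff₀ hu]
      calc κ * a1 ≤ κ * (β * (1 - e1)) := mul_le_mul_of_nonneg_left hb1 hκn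
        _ = κ * β * (1 - e1) := by ring
    have k2 : (1 - Hb (bconv α0 d2)) / (1 - e2) ≤ κ * (1 - β) := by
      rw [e2', div_le_iff₀ hv]
      calc κ * a2 ≤ κ * ((1 - β) * (1 - e2)) := mul_le_mul_of_nonneg_left hb2 hκn
        _ = κ * (1 - β) * (1 - e2) := by ring
    have hsum : κ * β + κ * (1 - β) = κ := by ring
    rw [hκ0def]; linarith
  · rintro v ⟨α, hα, rfl⟩
    exact hmax α hα



end
end
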